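/- arXiv:1004.5229 — 5 statements merged into one kernel-verified Lean document; each statement's English description precedes it below -/
import Mathlib

section
/- The function f(ν) = Σ_{i∈Z̄} p_i log(ν − V_i) + log(Σ_{i∈Z̄} p_i/(ν − V_i)) is monotonically decreasing on (max_{i∈Z̄} V_i, ∞), provided V is not constant on the support of p. -/
/-!
Writing `S ν = ∑ pᵢ / (ν - Vᵢ)` and `T ν = ∑ pᵢ / (ν - Vᵢ)²`, the derivative of `f` is
`S - T / S = (S² - T) / S`. Since `S > 0` and `S² < T` is the strict Jensen inequality for `x ↦ x²`
at the non-constant points `1 / (ν - Vᵢ)` with weights `pᵢ`, the derivative is negative.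
-/

open Finset

section WeightedLogPotential

variable {ι : Type*} (s : Finset ι) (w V : ι → ℝ)

theorem sq_sum_mul_lt_sum_mul_sq {a : ι → ℝ} (hw : ∀ i ∈ s, 0 < w i) (hw1 : ∑ i ∈ s, w i = 1)
    (ha : ∃ i ∈ s, ∃ j ∈ s, a i ≠ a j) :
    (∑ i ∈ s, w i * a i) ^ 2 < ∑ i ∈ s, w i * a i ^ 2 :=
  (even_two.strictConvexOn_pow two_ne_zero).map_sum_lt hw hw1 (fun _ _ ↦ Set.mem_univ _) ha

theorem hasDerivAt_sum_mul_log_sub {x : ℝ} (hx : ∀ i ∈ s, V i ≠ x) :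
    HasDerivAt (fun ν ↦ ∑ i ∈ s, w i * Real.log (ν - V i)) (∑ i ∈ s, w i / (x - V i)) x := by
  refine HasDerivAt.fun_sum fun i hi ↦ ?_
  have := (((hasDerivAt_id x).sub_const (V i)).log (sub_ne_zero.2 (hx i hi).symm)).const_mul (w i)
  simpa [div_eq_mul_inv] using this

theorem hasDerivAt_sum_div_sub {x : ℝ} (hx : ∀ i ∈ s, V i ≠ x) :
    HasDerivAt (fun ν ↦ ∑ i ∈ s, w i / (ν - V i)) (-∑ i ∈ s, w i / (x - V i) ^ 2) x := by
  rw [← sum_neg_distrib]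
  refine HasDerivAt.fun_sum fun i hi ↦ ?_
  have := (((hasDerivAt_id' x).sub_const (V i)).inv (sub_ne_zero.2 (hx i hi).symm)).const_mul (w i)
  simpa [div_eq_mul_inv] using this

theorem strictAntiOn_sum_mul_log_sub_add_log_sum_div (hw : ∀ i ∈ s, 0 < w i)
    (hw1 : ∑ i ∈ s, w i = 1) (hV : ∃ i ∈ s, ∃ j ∈ s, V i ≠ V j) :
    StrictAntiOn
      (fun ν ↦ ∑ i ∈ s, w i * Real.log (ν - V i) + Real.log (∑ i ∈ s, w i / (ν - V i)))
      {ν | ∀ i ∈ s, V i < ν} := by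
  have hD_eq : {ν | ∀ i ∈ s, V i < ν} = ⋂ i ∈ s, Set.Ioi (V i) := by ext; simp
  have hD : IsOpen {ν | ∀ i ∈ s, V i < ν} := hD_eq ▸ isOpen_biInter_finset fun i _ ↦ isOpen_Ioi
  have hconv : Convex ℝ {ν | ∀ i ∈ s, V i < ν} :=
    hD_eq ▸ convex_iInter₂ fun i _ ↦ convex_Ioi (V i)
  obtain ⟨i₀, hi₀, j₀, hj₀, hV₀⟩ := hV
  set S := fun x ↦ ∑ i ∈ s, w i / (x - V i)
  set T := fun x ↦ ∑ i ∈ s, w i / (x - V i) ^ 2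
  have hS_pos : ∀ x ∈ {ν | ∀ i ∈ s, V i < ν}, 0 < S x := fun x hx ↦
    sum_pos (fun i hi ↦ div_pos (hw i hi) (sub_pos.2 (hx i hi))) ⟨i₀, hi₀⟩
  have hderiv : ∀ x ∈ {ν | ∀ i ∈ s, V i < ν}, HasDerivAt
      (fun ν ↦ ∑ i ∈ s, w i * Real.log (ν - V i) + Real.log (S ν)) (S x + -T x / S x) x :=
    fun x hx ↦ (hasDerivAt_sum_mul_log_sub s w V fun i hi ↦ (hx i hi).ne).add
      ((hasDerivAt_sum_div_sub s w V fun i hi ↦ (hx i hi).ne).log (hS_pos x hx).ne')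
  refine strictAntiOn_of_deriv_neg hconv (fun x hx ↦ (hderiv x hx).continuousAt.continuousWithinAt)
    fun x hx ↦ ?_
  rw [hD.interior_eq] at hx
  have hST : S x ^ 2 < T x := by
    have key := sq_sum_mul_lt_sum_mul_sq s w (a := fun i ↦ (x - V i)⁻¹) hw hw1
      ⟨i₀, hi₀, j₀, hj₀, by simpa using hV₀⟩
    simpa only [S, T, div_eq_mul_inv, inv_pow] using key
  rw [(hderiv x hx).deriv, neg_div, ← sub_eq_add_neg, sub_neg, lt_div_iff₀ (hS_pos x hx), ← sq]
  exact hST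

end WeightedLogPotential

/-- The function f is strictly decreasing on (max_{i ∈ Z̄} V i, ∞) when V is
not constant on the support of p. -/
theorem f_strictAntiOn (n : ℕ) (p V : Fin n → ℝ)
    (hp0 : ∀ i, 0 ≤ p i) (hp1 : ∑ i, p i = 1)
    (hV : ∃ i j, 0 < p i ∧ 0 < p j ∧ V i ≠ V j) :
    StrictAntiOn
      (fun ν => (∑ i ∈ univ.filter (fun i => 0 < p i), p i * Real.log (ν - V i))
        + Real.log (∑ i ∈ univ.filter (fun i => 0 < p i), p i / (ν - V i)))
      {ν : ℝ | ∀ i, 0 < p i → V i < ν} := by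
  refine (strictAntiOn_sum_mul_log_sub_add_log_sum_div _ p V (fun i hi ↦ (mem_filter.1 hi).2)
    ?_ ?_).mono fun ν hν i hi ↦ hν i (mem_filter.1 hi).2
  · rwa [sum_filter_of_ne fun i _ h ↦ (hp0 i).lt_of_ne' h]
  · obtain ⟨i, j, hi, hj, hij⟩ := hV
    exact ⟨i, by simpa using hi, j, by simpa using hj, hij⟩
end

section
/- The function f(ν) = Σ_{i∈Z̄} p_i log(ν − V_i) + log(Σ_{i∈Z̄} p_i/(ν − V_i)) is convex on (max_{i∈Z̄} V_i, ∞). -/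
/-!
Writing `Mₖ(ν) = ∑ p i / (ν - V i) ^ k`, one computes `f' = M₁ - M₂ / M₁` and
`f'' = (2 M₁ M₃ - M₂² - M₂ M₁²) / M₁²`. The numerator is nonnegative by the two Cauchy–Schwarz
inequalities `M₁² ≤ M₀ M₂ = M₂` and `M₂² ≤ M₁ M₃`, since then `M₂ M₁² ≤ M₂² ≤ M₁ M₃`.
-/

open Finset Real Set

noncomputable def invMoment {ι : Type*} (s : Finset ι) (w a : ι → ℝ) (k : ℕ) (x : ℝ) : ℝ :=
  ∑ i ∈ s, w i / (x - a i) ^ k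

lemma hasDerivAt_div_sub_pow {x : ℝ} (c b : ℝ) (k : ℕ) (hx : x ≠ b) :
    HasDerivAt (fun y => c / (y - b) ^ k) (-k * (c / (x - b) ^ (k + 1))) x := by
  have hxb : x - b ≠ 0 := sub_ne_zero.2 hx
  have h := (((hasDerivAt_id x).sub_const b).fun_pow k).fun_inv (pow_ne_zero k hxb) |>.const_mul c
  simp only [id, ← div_eq_mul_inv, mul_one] at h
  refine h.congr_deriv ?_
  rcases k with _ | k
  · simp
  · field_simp
    push_cast
    ring

lemma convexOn_of_isOpen_of_hasDerivAt2_nonneg {D : Set ℝ} (hD : Convex ℝ D) (hDo : IsOpen D)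
    {f f' f'' : ℝ → ℝ} (hf : ∀ x ∈ D, HasDerivAt f (f' x) x)
    (hf' : ∀ x ∈ D, HasDerivAt f' (f'' x) x) (hf''₀ : ∀ x ∈ D, 0 ≤ f'' x) : ConvexOn ℝ D f := by
  refine convexOn_of_hasDerivWithinAt2_nonneg (f' := f') (f'' := f'') hD
    (fun x hx => (hf x hx).continuousAt.continuousWithinAt) ?_ ?_ ?_ <;> rw [hDo.interior_eq]
  exacts [fun x hx => (hf x hx).hasDerivWithinAt, fun x hx => (hf' x hx).hasDerivWithinAt, hf''₀]

section InvMoment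

variable {ι : Type*} (s : Finset ι) (w a : ι → ℝ) {x : ℝ}

local notation "M" => invMoment s w a

@[simp]
lemma invMoment_zero : M 0 x = ∑ i ∈ s, w i := by
  simp [invMoment]

@[simp]
lemma invMoment_one : M 1 x = ∑ i ∈ s, w i / (x - a i) := by
  simp [invMoment]

lemma hasDerivAt_invMoment (k : ℕ) (hx : ∀ i ∈ s, x ≠ a i) :
    HasDerivAt (M k) (-k * M (k + 1) x) x := by
  unfold invMoment
  rw [mul_sum]
  exact HasDerivAt.fun_sum fun i hi => hasDerivAt_div_sub_pow (w i) (a i) k (hx i hi)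

lemma invMoment_pos (k : ℕ) (hw : ∀ i ∈ s, 0 < w i) (hs : s.Nonempty) (hx : ∀ i ∈ s, a i < x) :
    0 < M k x :=
  sum_pos (fun i hi => div_pos (hw i hi) (pow_pos (sub_pos.2 (hx i hi)) k)) hs

lemma sq_invMoment_succ_le_mul (k : ℕ) (hw : ∀ i ∈ s, 0 ≤ w i) (hx : ∀ i ∈ s, a i < x) :
    M (k + 1) x ^ 2 ≤ M k x * M (k + 2) x := by
  refine sum_sq_le_sum_mul_sum_of_sq_le_mul s
    (fun i hi => div_nonneg (hw i hi) (pow_pos (sub_pos.2 (hx i hi)) k).le)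
    (fun i hi => div_nonneg (hw i hi) (pow_pos (sub_pos.2 (hx i hi)) (k + 2)).le)
    fun i hi => le_of_eq ?_
  have := (sub_pos.2 (hx i hi)).ne'
  field_simp
  ring

lemma sq_invMoment_two_add_le (hw : ∀ i ∈ s, 0 ≤ w i) (hws : ∑ i ∈ s, w i = 1)
    (hx : ∀ i ∈ s, a i < x) : M 2 x ^ 2 + M 2 x * M 1 x ^ 2 ≤ 2 * M 1 x * M 3 x := by
  have h₁₂ : M 1 x ^ 2 ≤ M 2 x := by
    simpa [hws] using sq_invMoment_succ_le_mul s w a 0 hw hx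
  have h₂₃ := sq_invMoment_succ_le_mul s w a 1 hw hx
  have h₂ : 0 ≤ M 2 x := (sq_nonneg _).trans h₁₂
  nlinarith [mul_le_mul_of_nonneg_left h₁₂ h₂]

lemma hasDerivAt_sum_mul_log_add_log_invMoment (hx : ∀ i ∈ s, x ≠ a i) (h₁ : M 1 x ≠ 0) :
    HasDerivAt (fun y => ∑ i ∈ s, w i * log (y - a i) + log (M 1 y))
      (M 1 x - M 2 x / M 1 x) x := by
  have hsum : HasDerivAt (fun y => ∑ i ∈ s, w i * log (y - a i)) (M 1 x) x := by
    refine HasDerivAt.fun_sum fun i hi => ?_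
    have := (((hasDerivAt_id x).sub_const (a i)).log (sub_ne_zero.2 (hx i hi))).const_mul (w i)
    simpa [div_eq_mul_inv] using this
  refine (hsum.fun_add ((hasDerivAt_invMoment s w a 1 hx).log h₁)).congr_deriv ?_
  norm_num
  ring

lemma hasDerivAt_invMoment_sub_div (hx : ∀ i ∈ s, x ≠ a i) (h₁ : M 1 x ≠ 0) :
    HasDerivAt (fun y => M 1 y - M 2 y / M 1 y)
      ((2 * M 1 x * M 3 x - (M 2 x ^ 2 + M 2 x * M 1 x ^ 2)) / M 1 x ^ 2) x := by
  refine ((hasDerivAt_invMoment s w a 1 hx).fun_sub ((hasDerivAt_invMoment s w a 2 hx).fun_div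
    (hasDerivAt_invMoment s w a 1 hx) h₁)).congr_deriv ?_
  field_simp
  push_cast
  ring

theorem convexOn_sum_mul_log_add_log_invMoment (hw : ∀ i ∈ s, 0 < w i)
    (hws : ∑ i ∈ s, w i = 1) :
    ConvexOn ℝ (⋂ i ∈ s, Ioi (a i)) (fun y => ∑ i ∈ s, w i * log (y - a i) + log (M 1 y)) := by
  have hD : ∀ y ∈ ⋂ i ∈ s, Ioi (a i), ∀ i ∈ s, a i < y := fun y hy => mem_iInter₂.1 hy
  have hne : ∀ y ∈ ⋂ i ∈ s, Ioi (a i), ∀ i ∈ s, y ≠ a i := fun y hy i hi => (hD y hy i hi).ne'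
  have hs : s.Nonempty := nonempty_of_sum_ne_zero (f := w) (by simp [hws])
  have h₁ : ∀ y ∈ ⋂ i ∈ s, Ioi (a i), M 1 y ≠ 0 := fun y hy =>
    (invMoment_pos s w a 1 hw hs (hD y hy)).ne'
  have hf := fun y hy => hasDerivAt_sum_mul_log_add_log_invMoment s w a (hne y hy) (h₁ y hy)
  have hf' := fun y hy => hasDerivAt_invMoment_sub_div s w a (hne y hy) (h₁ y hy)
  have hf''₀ : ∀ y ∈ ⋂ i ∈ s, Ioi (a i),
      0 ≤ (2 * M 1 y * M 3 y - (M 2 y ^ 2 + M 2 y * M 1 y ^ 2)) / M 1 y ^ 2 := fun y hy =>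
    div_nonneg (sub_nonneg.2 <| sq_invMoment_two_add_le s w a (fun i hi => (hw i hi).le) hws
      (hD y hy)) (sq_nonneg _)
  have hconv : Convex ℝ (⋂ i ∈ s, Ioi (a i)) := convex_iInter₂ fun i _ => convex_Ioi _
  have hopen : IsOpen (⋂ i ∈ s, Ioi (a i)) := isOpen_biInter_finset fun i _ => isOpen_Ioi
  exact convexOn_of_isOpen_of_hasDerivAt2_nonneg hconv hopen hf hf' hf''₀

end InvMoment

/-- The function f is convex on (max_{i ∈ Z̄} V i, ∞). -/
theorem f_convexOn (n : ℕ) (p V : Fin n → ℝ)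
    (hp0 : ∀ i, 0 ≤ p i) (hp1 : ∑ i, p i = 1) :
    ConvexOn ℝ {ν : ℝ | ∀ i, 0 < p i → V i < ν}
      (fun ν => (∑ i ∈ univ.filter (fun i => 0 < p i), p i * Real.log (ν - V i))
        + Real.log (∑ i ∈ univ.filter (fun i => 0 < p i), p i / (ν - V i))) := by
  have hsupp : ∑ i ∈ univ.filter (fun i => 0 < p i), p i = 1 := by
    rw [sum_filter_of_ne fun i _ hi => (hp0 i).lt_of_ne' hi, hp1]
  have hD : {ν : ℝ | ∀ i, 0 < p i → V i < ν} =
      ⋂ i ∈ univ.filter (fun i => 0 < p i), Ioi (V i) := by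
    ext ν
    simp
  simpa [hD] using convexOn_sum_mul_log_add_log_invMoment _ p V (by simp) hsupp
end

section
/- As ν → max_{i∈Z̄} V_i from the right, f(ν) → +∞, provided V is not constant on the support Z̄ of p and the maximizing index in Z̄ has p-mass strictly less than 1. -/
open Finset Filter

/-- f(ν) → +∞ as ν → M⁺ where M = max_{i ∈ Z̄} V i, provided V is not constant
on the support of p and the p-mass at the maximizing indices is < 1. -/
theorem f_tendsto_atTop (n : ℕ) (p V : Fin n → ℝ) (M : ℝ)
    (hp0 : ∀ i, 0 ≤ p i) (hp1 : ∑ i, p i = 1)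
    (hMmax : ∀ i, 0 < p i → V i ≤ M) (hMmem : ∃ i, 0 < p i ∧ V i = M)
    (hV : ∃ i j, 0 < p i ∧ 0 < p j ∧ V i ≠ V j)
    (hmass : ∑ i ∈ univ.filter (fun i => 0 < p i ∧ V i = M), p i < 1) :
    Tendsto
      (fun ν => (∑ i ∈ univ.filter (fun i => 0 < p i), p i * Real.log (ν - V i))
        + Real.log (∑ i ∈ univ.filter (fun i => 0 < p i), p i / (ν - V i)))
      (nhdsWithin M (Set.Ioi M)) atTop := by
  set A := univ.filter (fun i => 0 < p i ∧ V i = M) with hA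
  set S := univ.filter (fun i => 0 < p i) with hS
  set a := ∑ i ∈ A, p i with ha
  have hAS : A ⊆ S := by
    intro i hi
    simp only [hA, hS, mem_filter] at *
    exact ⟨hi.1, hi.2.1⟩
  obtain ⟨i0, hi0p, hi0V⟩ := hMmem
  have hi0A : i0 ∈ A := by simp [hA, hi0p, hi0V]
  have ha0 : 0 < a :=
    Finset.sum_pos' (fun i _ => hp0 i) ⟨i0, hi0A, hi0p⟩
  have ha1 : a < 1 := hmass
  set C := ∑ i ∈ S \ A, p i * Real.log (M - V i) with hC
  have hbound : ∀ ν ∈ Set.Ioi M,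
      (a - 1) * Real.log (ν - M) + (C + Real.log a) ≤
      (∑ i ∈ S, p i * Real.log (ν - V i)) + Real.log (∑ i ∈ S, p i / (ν - V i)) := by
    intro ν hν
    have hνM : M < ν := hν
    have hpos : ∀ i ∈ S, 0 < ν - V i := by
      intro i hi
      simp only [hS, mem_filter] at hi
      have := hMmax i hi.2
      linarith
    have hsubpos : 0 < ν - M := by linarith
    -- second term
    have keyA : ∑ i ∈ A, p i / (ν - V i) = a / (ν - M) := by
      rw [ha, Finset.sum_div]
      refine Finset.sum_congr rfl fun i hi => ?_
      simp only [hA, mem_filter] at hi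
      rw [hi.2.2]
    have hsub : a / (ν - M) ≤ ∑ i ∈ S, p i / (ν - V i) := by
      rw [← keyA]
      refine Finset.sum_le_sum_of_subset_of_nonneg hAS fun i hi _ => ?_
      exact div_nonneg (hp0 i) (hpos i hi).le
    have h2 : Real.log a - Real.log (ν - M) ≤
        Real.log (∑ i ∈ S, p i / (ν - V i)) := by
      have := Real.log_le_log (by positivity) hsub
      rwa [Real.log_div ha0.ne' hsubpos.ne'] at this
    -- first term
    have hA1 : ∑ i ∈ A, p i * Real.log (ν - V i) = a * Real.log (ν - M) := by
      rw [ha, Finset.sum_mul]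
      refine Finset.sum_congr rfl fun i hi => ?_
      simp only [hA, mem_filter] at hi
      rw [hi.2.2]
    have hB1 : C ≤ ∑ i ∈ S \ A, p i * Real.log (ν - V i) := by
      refine Finset.sum_le_sum fun i hi => ?_
      rw [Finset.mem_sdiff] at hi
      obtain ⟨hiS, hiA⟩ := hi
      simp only [hS, mem_filter] at hiS
      have hVi : V i < M := by
        rcases lt_or_eq_of_le (hMmax i hiS.2) with h | h
        · exact h
        · exact absurd (by simp [hA, hiS.2, h]) hiA
      have : Real.log (M - V i) ≤ Real.log (ν - V i) :=
        Real.log_le_log (by linarith) (by linarith)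
      exact mul_le_mul_of_nonneg_left this (hp0 i)
    have hsplit : ∑ i ∈ S, p i * Real.log (ν - V i)
        = (∑ i ∈ S \ A, p i * Real.log (ν - V i)) + ∑ i ∈ A, p i * Real.log (ν - V i) :=
      (Finset.sum_sdiff hAS).symm
    rw [hsplit, hA1]
    nlinarith [h2, hB1]
  -- the lower-bound function tends to atTop
  have hlog : Tendsto (fun ν => Real.log (ν - M)) (nhdsWithin M (Set.Ioi M)) atBot := by
    apply Real.tendsto_log_nhdsGT_zero.comp
    apply tendsto_nhdsWithin_of_tendsto_nhds_of_eventually_within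
    · have : Tendsto (fun ν : ℝ => ν - M) (nhdsWithin M (Set.Ioi M)) (nhds (M - M)) :=
        (tendsto_id.sub_const M).mono_left nhdsWithin_le_nhds
      simpa using this
    · filter_upwards [self_mem_nhdsWithin] with ν hν
      simp only [Set.mem_Ioi] at *
      linarith
  have hg : Tendsto (fun ν => (a - 1) * Real.log (ν - M) + (C + Real.log a))
      (nhdsWithin M (Set.Ioi M)) atTop := by
    apply tendsto_atTop_add_const_right
    exact hlog.const_mul_atBot_of_neg (by linarith)
  refine tendsto_atTop_mono' _ ?_ hg
  filter_upwards [self_mem_nhdsWithin] with ν hν using hbound ν hν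
end

section
/- Asymptotic expansion: ν²·f(ν) → σ_{p,V}/2 as ν → ∞, where σ_{p,V} = Σ_i p_i V_i² − (Σ_i p_i V_i)² is the variance of V under p. -/
open Finset Filter Asymptotics Topology

/-! Put `x = ν⁻¹`. Since `∑ i, p i = 1`, the `log ν` terms cancel and
`f ν = ∑ i, p i * log (1 - V i * x) + log (∑ i, p i / (1 - V i * x))`.
The second-order expansions of `log (1 + y)` and `(1 - y)⁻¹` give, with `m` and `s` the first
two moments of `V` under `p`,
`∑ i, p i * log (1 - V i * x) = -m x - s x² / 2 + o(x²)` and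
`∑ i, p i / (1 - V i * x) = 1 + m x + s x² + o(x²)`, whose logarithm is
`m x + (s - m² / 2) x² + o(x²)`. Hence `f ν = (s - m²) / 2 · x² + o(x²)`. -/

theorem Real.isLittleO_log_one_add_sub_quadratic :
    (fun y : ℝ => Real.log (1 + y) - (y - y ^ 2 / 2)) =o[𝓝 0] fun y => y ^ 2 := by
  refine IsBigO.trans_isLittleO ?_ (isLittleO_pow_pow (by norm_num : 2 < 3))
  refine IsBigO.of_bound 2 ?_
  filter_upwards [Metric.ball_mem_nhds (0 : ℝ) (by norm_num : (0 : ℝ) < 1 / 2)] with y hy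
  rw [mem_ball_zero_iff, Real.norm_eq_abs] at hy
  have htaylor := Real.abs_log_sub_add_sum_range_le (x := -y) (by rw [abs_neg]; linarith) 2
  norm_num [sum_range_succ] at htaylor
  rw [Real.norm_eq_abs, Real.norm_eq_abs, abs_pow]
  calc |Real.log (1 + y) - (y - y ^ 2 / 2)| = |-y + y ^ 2 / 2 + Real.log (1 + y)| := by ring_nf
    _ ≤ |y| ^ 3 / (1 - |y|) := htaylor
    _ ≤ 2 * |y| ^ 3 := by
      rw [div_le_iff₀ (by linarith)]
      nlinarith [pow_nonneg (abs_nonneg y) 3]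

theorem isLittleO_inv_one_sub_sub_quadratic :
    (fun y : ℝ => (1 - y)⁻¹ - (1 + y + y ^ 2)) =o[𝓝 0] fun y => y ^ 2 := by
  refine IsBigO.trans_isLittleO ?_ (isLittleO_pow_pow (by norm_num : 2 < 3))
  have hinv : Tendsto (fun y : ℝ => (1 - y)⁻¹) (𝓝 0) (𝓝 1) := by
    simpa using ((continuous_const.sub continuous_id).tendsto (0 : ℝ)).inv₀
      (by norm_num : (1 : ℝ) - 0 ≠ 0)
  have hgeom : ∀ᶠ y : ℝ in 𝓝 0, y ^ 3 * (1 - y)⁻¹ = (1 - y)⁻¹ - (1 + y + y ^ 2) := by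
    filter_upwards [eventually_ne_nhds (zero_ne_one' ℝ)] with y hy
    have : 1 - y ≠ 0 := sub_ne_zero.2 hy.symm
    field_simp
    ring
  exact ((isBigO_refl (fun y : ℝ => y ^ 3) _).mul (hinv.isBigO_one ℝ)).congr' hgeom
    (.of_forall fun y => mul_one _)

theorem Asymptotics.IsLittleO.comp_const_mul_sq {f : ℝ → ℝ} (h : f =o[𝓝 0] fun y => y ^ 2)
    (c : ℝ) : (fun x => f (c * x)) =o[𝓝 0] fun x => x ^ 2 := by
  have hc : Tendsto (fun x : ℝ => c * x) (𝓝 0) (𝓝 0) := by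
    simpa using (continuous_const_mul c).tendsto 0
  refine (h.comp_tendsto hc).trans_isBigO ?_
  simpa only [Function.comp_def, mul_pow] using
    (isBigO_refl (fun x : ℝ => x ^ 2) _).const_mul_left (c ^ 2)

theorem isLittleO_log_one_add_of_isLittleO {u : ℝ → ℝ} {a b : ℝ}
    (hu : (fun x => u x - (a * x + b * x ^ 2)) =o[𝓝 0] fun x => x ^ 2) :
    (fun x => Real.log (1 + u x) - (a * x + (b - a ^ 2 / 2) * x ^ 2)) =o[𝓝 0] fun x => x ^ 2 := by
  have hsq : (fun x : ℝ => x ^ 2) =o[𝓝 0] fun x => x := by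
    simpa using isLittleO_pow_pow (𝕜 := ℝ) (by norm_num : 1 < 2)
  have hlin : ∀ c : ℝ, (fun x : ℝ => c * x) =O[𝓝 0] fun x => x :=
    fun c => (isBigO_refl _ _).const_mul_left c
  have hu_sub : (fun x => u x - a * x) =o[𝓝 0] fun x => x :=
    ((hu.trans hsq).add (((isBigO_refl _ _).const_mul_left b).trans_isLittleO hsq)).congr_left
      fun x => by ring
  have hu_lin : u =O[𝓝 0] fun x => x :=
    (hu_sub.isBigO.add (hlin a)).congr_left fun x => by ring
  have hu_zero : Tendsto u (𝓝 0) (𝓝 0) := hu_lin.trans_tendsto tendsto_id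
  have hlog : (fun x => Real.log (1 + u x) - (u x - u x ^ 2 / 2)) =o[𝓝 0] fun x => x ^ 2 :=
    (Real.isLittleO_log_one_add_sub_quadratic.comp_tendsto hu_zero).trans_isBigO (hu_lin.pow 2)
  have hu_sq : (fun x => u x ^ 2 - a ^ 2 * x ^ 2) =o[𝓝 0] fun x => x ^ 2 :=
    (hu_sub.mul_isBigO (hu_lin.add (hlin a))).congr (fun x => by ring) fun x => by ring
  exact ((hlog.add hu).sub (hu_sq.const_mul_left (1 / 2))).congr_left fun x => by ring

section WeightedSums

variable {ι : Type*} [Fintype ι] (p V : ι → ℝ)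

theorem isLittleO_sum_mul_log_one_sub :
    (fun x => ∑ i, p i * Real.log (1 - V i * x)
      - (-(∑ i, p i * V i) * x - (∑ i, p i * V i ^ 2) / 2 * x ^ 2)) =o[𝓝 0] fun x => x ^ 2 := by
  have hterm : ∀ i, (fun x => p i * (Real.log (1 + -V i * x) - (-V i * x - (-V i * x) ^ 2 / 2)))
      =o[𝓝 0] fun x => x ^ 2 := fun i =>
    (Real.isLittleO_log_one_add_sub_quadratic.comp_const_mul_sq (-V i)).const_mul_left (p i)
  refine (IsLittleO.fun_sum (s := univ) fun i _ => hterm i).congr_left fun x => ?_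
  simp only [neg_mul, ← sub_eq_add_neg, mul_sub, sum_sub_distrib, sum_mul, sum_div,
    ← sum_neg_distrib]
  congr 2 <;> exact sum_congr rfl fun i _ => by ring

theorem isLittleO_sum_div_one_sub :
    (fun x => ∑ i, p i / (1 - V i * x)
      - (∑ i, p i + (∑ i, p i * V i) * x + (∑ i, p i * V i ^ 2) * x ^ 2))
      =o[𝓝 0] fun x => x ^ 2 := by
  have hterm : ∀ i, (fun x => p i * ((1 - V i * x)⁻¹ - (1 + V i * x + (V i * x) ^ 2)))
      =o[𝓝 0] fun x => x ^ 2 := fun i =>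
    (isLittleO_inv_one_sub_sub_quadratic.comp_const_mul_sq (V i)).const_mul_left (p i)
  refine (IsLittleO.fun_sum (s := univ) fun i _ => hterm i).congr_left fun x => ?_
  simp only [mul_sub, mul_add, sum_sub_distrib, sum_add_distrib, sum_mul, div_eq_mul_inv, mul_one,
    mul_pow, ← mul_assoc]

theorem isLittleO_sum_mul_log_one_sub_add_log_sum_div (hp : ∑ i, p i = 1) :
    (fun x => ∑ i, p i * Real.log (1 - V i * x) + Real.log (∑ i, p i / (1 - V i * x))
      - ((∑ i, p i * V i ^ 2) - (∑ i, p i * V i) ^ 2) / 2 * x ^ 2) =o[𝓝 0] fun x => x ^ 2 := by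
  have hlog := isLittleO_log_one_add_of_isLittleO (u := fun x => ∑ i, p i / (1 - V i * x) - 1)
    (a := ∑ i, p i * V i) (b := ∑ i, p i * V i ^ 2)
    ((isLittleO_sum_div_one_sub p V).congr_left fun x => by rw [hp]; ring)
  refine ((isLittleO_sum_mul_log_one_sub p V).add hlog).congr_left fun x => ?_
  rw [add_sub_cancel]
  ring

theorem eventuallyEq_sum_mul_log_sub_add_log_sum_div_sub (hp : ∑ i, p i = 1) :
    (fun ν => ∑ i, p i * Real.log (ν - V i) + Real.log (∑ i, p i / (ν - V i))) =ᶠ[atTop]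
      fun ν => ∑ i, p i * Real.log (1 - V i * ν⁻¹) + Real.log (∑ i, p i / (1 - V i * ν⁻¹)) := by
  have hV : ∀ᶠ x in 𝓝 (0 : ℝ), ∀ i, 1 - V i * x ≠ 0 :=
    eventually_all.2 fun i =>
      (by fun_prop : Continuous fun x => 1 - V i * x).continuousAt.eventually_ne (by simp)
  have hS : ∀ᶠ x in 𝓝 (0 : ℝ), ∑ i, p i / (1 - V i * x) ≠ 0 := by
    have hcont : ContinuousAt (fun x => ∑ i, p i / (1 - V i * x)) 0 := by
      fun_prop (disch := simp)
    exact hcont.eventually_ne (by simp [hp])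
  filter_upwards [tendsto_inv_atTop_zero.eventually (hV.and hS), eventually_ne_atTop 0]
    with ν ⟨hVν, hSν⟩ hν
  have hfac : ∀ i, ν - V i = ν * (1 - V i * ν⁻¹) := fun i => by field_simp
  have hsum_log : ∑ i, p i * Real.log (ν - V i)
      = Real.log ν + ∑ i, p i * Real.log (1 - V i * ν⁻¹) := by
    simp only [hfac, Real.log_mul hν (hVν _), mul_add, sum_add_distrib, ← sum_mul, hp, one_mul]
  have hsum_div : ∑ i, p i / (ν - V i) = ν⁻¹ * ∑ i, p i / (1 - V i * ν⁻¹) := by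
    rw [mul_sum]
    exact sum_congr rfl fun i _ => by rw [hfac, div_mul_eq_div_div_swap, div_eq_inv_mul]
  rw [hsum_log, hsum_div, Real.log_mul (inv_ne_zero hν) hSν, Real.log_inv]
  ring

end WeightedSums

theorem tendsto_sq_mul_comp_inv_atTop {g : ℝ → ℝ} {c : ℝ}
    (h : (fun x => g x - c * x ^ 2) =o[𝓝 0] fun x => x ^ 2) :
    Tendsto (fun ν => ν ^ 2 * g ν⁻¹) atTop (𝓝 c) := by
  have hdiv := (h.tendsto_div_nhds_zero.comp tendsto_inv_atTop_zero).add_const c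
  rw [zero_add] at hdiv
  refine hdiv.congr' ?_
  filter_upwards [eventually_ne_atTop 0] with ν hν
  simp only [Function.comp_apply]
  field_simp
  ring

/-- Asymptotic expansion: ν² f(ν) → σ_{p,V}/2 as ν → ∞, where σ_{p,V} is the
variance of V under p. -/
theorem f_asymptotic (n : ℕ) (p V : Fin n → ℝ)
    (hp0 : ∀ i, 0 ≤ p i) (hp1 : ∑ i, p i = 1) :
    Tendsto
      (fun ν : ℝ => ν ^ 2 *
        ((∑ i ∈ univ.filter (fun i => 0 < p i), p i * Real.log (ν - V i))
          + Real.log (∑ i ∈ univ.filter (fun i => 0 < p i), p i / (ν - V i))))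
      atTop
      (nhds (((∑ i, p i * (V i) ^ 2) - (∑ i, p i * V i) ^ 2) / 2)) := by
  have hlog_sum : ∀ ν, ∑ i ∈ univ.filter (fun i => 0 < p i), p i * Real.log (ν - V i)
      = ∑ i, p i * Real.log (ν - V i) := fun ν =>
    sum_filter_of_ne fun i _ h => (hp0 i).lt_of_ne' (left_ne_zero_of_mul h)
  have hdiv_sum : ∀ ν, ∑ i ∈ univ.filter (fun i => 0 < p i), p i / (ν - V i)
      = ∑ i, p i / (ν - V i) := fun ν =>
    sum_filter_of_ne fun i _ h => (hp0 i).lt_of_ne' (div_ne_zero_iff.1 h).1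
  simp only [hlog_sum, hdiv_sum]
  refine (tendsto_sq_mul_comp_inv_atTop
    (isLittleO_sum_mul_log_one_sub_add_log_sum_div p V hp1)).congr' ?_
  filter_upwards [eventuallyEq_sum_mul_log_sub_add_log_sum_div_sub p V hp1] with ν hν
  rw [hν]
end

section
/- For any probability vector p with support Z̄, V ∈ ℝ^n, ε > 0, and V non-constant on Z̄ with p_{argmax} < 1, there is a unique ν* > max_{i∈Z̄} V_i with f(ν*) = ε. -/
/-!
On `(M, ∞)` the derivative of `f` is `𝔼X - 𝔼X² / 𝔼X` for `X = 1 / (ν - V)`, which is negative by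
strict Jensen for `x ↦ x²` since `V` is non-constant, so `f` is strictly decreasing there. As
`ν ↓ M`, the atoms at `M`, of total mass `q < 1`, contribute `q log (ν - M)` and the second term
is at least `-log (ν - M)`, so `f → ∞`; as `ν → ∞`, `f ν ≤ (M - min V) / (ν - M) → 0`.
The intermediate value theorem gives the root and monotonicity its uniqueness.
-/

open Finset Filter Real Set Topology

/-- For `X = 1 / (ν - V)` under the weights `p`, this is `log 𝔼[X] - 𝔼[log X]`, the Jensen gap
of `log`. -/
noncomputable def logJensenGap {ι : Type*} (S : Finset ι) (p V : ι → ℝ) (ν : ℝ) : ℝ :=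
  ∑ i ∈ S, p i * log (ν - V i) + log (∑ i ∈ S, p i / (ν - V i))

section
variable {ι : Type*} {S : Finset ι} {p V : ι → ℝ}

lemma hasDerivAt_logJensenGap {ν : ℝ} (hν : ∀ i ∈ S, ν - V i ≠ 0)
    (hA : ∑ i ∈ S, p i / (ν - V i) ≠ 0) :
    HasDerivAt (logJensenGap S p V)
      (∑ i ∈ S, p i / (ν - V i) - (∑ i ∈ S, p i / (ν - V i) ^ 2) / ∑ i ∈ S, p i / (ν - V i)) ν := by
  have hsub i : HasDerivAt (fun x => x - V i) 1 ν := (hasDerivAt_id ν).sub_const (V i)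
  have hlog : HasDerivAt (fun x => ∑ i ∈ S, p i * log (x - V i)) (∑ i ∈ S, p i / (ν - V i)) ν :=
    HasDerivAt.fun_sum fun i hi => by
      simpa [div_eq_mul_inv] using ((hsub i).log (hν i hi)).const_mul (p i)
  have hinv : HasDerivAt (fun x => ∑ i ∈ S, p i / (x - V i))
      (-∑ i ∈ S, p i / (ν - V i) ^ 2) ν := by
    rw [← sum_neg_distrib]
    exact HasDerivAt.fun_sum fun i hi =>
      ((hasDerivAt_const ν (p i)).div (hsub i) (hν i hi)).congr_deriv (by ring)
  exact (hlog.add (hinv.log hA)).congr_deriv (by ring)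

lemma sum_div_sub_pos (hp : ∀ i ∈ S, 0 < p i) (hS : S.Nonempty) {ν : ℝ}
    (hν : ∀ i ∈ S, V i < ν) : 0 < ∑ i ∈ S, p i / (ν - V i) :=
  sum_pos (fun i hi => div_pos (hp i hi) (sub_pos.2 (hν i hi))) hS

lemma continuousOn_logJensenGap (hp : ∀ i ∈ S, 0 < p i) (hS : S.Nonempty) {M : ℝ}
    (hM : ∀ i ∈ S, V i ≤ M) : ContinuousOn (logJensenGap S p V) (Ioi M) := fun ν hν =>
  have hν' : ∀ i ∈ S, V i < ν := fun i hi => (hM i hi).trans_lt hν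
  (hasDerivAt_logJensenGap (fun i hi => (sub_pos.2 (hν' i hi)).ne')
    (sum_div_sub_pos hp hS hν').ne').continuousAt.continuousWithinAt

lemma deriv_logJensenGap_neg (hp : ∀ i ∈ S, 0 < p i) (hp1 : ∑ i ∈ S, p i = 1)
    (hV : ∃ i ∈ S, ∃ j ∈ S, V i ≠ V j) {ν : ℝ} (hν : ∀ i ∈ S, V i < ν) :
    deriv (logJensenGap S p V) ν < 0 := by
  have hA := sum_div_sub_pos hp (nonempty_of_sum_ne_zero (f := p) (by simp [hp1])) hν
  have hjensen : (∑ i ∈ S, p i / (ν - V i)) ^ 2 < ∑ i ∈ S, p i / (ν - V i) ^ 2 := by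
    have hinj : ∃ i ∈ S, ∃ j ∈ S, (ν - V i)⁻¹ ≠ (ν - V j)⁻¹ := by
      obtain ⟨i, hi, j, hj, hij⟩ := hV
      exact ⟨i, hi, j, hj, fun h => hij (by linarith [inv_injective h])⟩
    simpa [div_eq_mul_inv, inv_pow] using
      (Even.strictConvexOn_pow even_two two_ne_zero).map_sum_lt hp hp1 (fun _ _ => trivial) hinj
  rw [(hasDerivAt_logJensenGap (fun i hi => (sub_pos.2 (hν i hi)).ne') hA.ne').deriv, sub_neg,
    lt_div_iff₀ hA]
  nlinarith

lemma strictAntiOn_logJensenGap (hp : ∀ i ∈ S, 0 < p i) (hp1 : ∑ i ∈ S, p i = 1)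
    (hV : ∃ i ∈ S, ∃ j ∈ S, V i ≠ V j) {M : ℝ} (hM : ∀ i ∈ S, V i ≤ M) :
    StrictAntiOn (logJensenGap S p V) (Ioi M) := by
  have hS : S.Nonempty := nonempty_of_sum_ne_zero (f := p) (by simp [hp1])
  refine strictAntiOn_of_deriv_neg (convex_Ioi M) (continuousOn_logJensenGap hp hS hM) ?_
  rw [interior_Ioi]
  exact fun ν hν => deriv_logJensenGap_neg hp hp1 hV fun i hi => (hM i hi).trans_lt hν

lemma le_logJensenGap (hp : ∀ i ∈ S, 0 < p i) {M : ℝ} (hM : ∀ i ∈ S, V i ≤ M) {i₀ : ι}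
    (hi₀ : i₀ ∈ S) (hVi₀ : V i₀ = M) {ν : ℝ} (hν : M < ν) :
    (∑ i ∈ S with V i = M, p i - 1) * log (ν - M)
      + (∑ i ∈ S with V i ≠ M, p i * log (M - V i) + log (p i₀)) ≤ logJensenGap S p V ν := by
  have hν' : ∀ i ∈ S, V i < ν := fun i hi => (hM i hi).trans_lt hν
  have hatM : ∑ i ∈ S with V i = M, p i * log (ν - V i)
      = (∑ i ∈ S with V i = M, p i) * log (ν - M) := by
    rw [sum_mul]
    exact sum_congr rfl fun i hi => by rw [(mem_filter.1 hi).2]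
  have hbelowM : ∑ i ∈ S with V i ≠ M, p i * log (M - V i)
      ≤ ∑ i ∈ S with V i ≠ M, p i * log (ν - V i) := by
    refine sum_le_sum fun i hi => ?_
    obtain ⟨hiS, hiM⟩ := mem_filter.1 hi
    have hVi : V i < M := (hM i hiS).lt_of_ne hiM
    gcongr
    exact (hp i hiS).le
  have hsum : log (p i₀) - log (ν - M) ≤ log (∑ i ∈ S, p i / (ν - V i)) := by
    rw [← log_div (hp i₀ hi₀).ne' (sub_pos.2 hν).ne']
    refine log_le_log (div_pos (hp i₀ hi₀) (sub_pos.2 hν)) ?_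
    rw [← hVi₀]
    exact single_le_sum (f := fun i => p i / (ν - V i))
      (fun i hi => (div_pos (hp i hi) (sub_pos.2 (hν' i hi))).le) hi₀
  rw [logJensenGap, ← sum_filter_add_sum_filter_not S (V · = M)]
  linarith

lemma tendsto_logJensenGap_nhdsGT (hp : ∀ i ∈ S, 0 < p i) {M : ℝ} (hM : ∀ i ∈ S, V i ≤ M)
    {i₀ : ι} (hi₀ : i₀ ∈ S) (hVi₀ : V i₀ = M) (hq : ∑ i ∈ S with V i = M, p i < 1) :
    Tendsto (logJensenGap S p V) (𝓝[>] M) atTop := by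
  have hsub : Tendsto (· - M) (𝓝[>] M) (𝓝[>] 0) :=
    tendsto_nhdsWithin_iff.2 ⟨((continuous_sub_right M).tendsto' M 0 (sub_self M)).mono_left
      nhdsWithin_le_nhds, eventually_mem_nhdsWithin.mono fun ν hν => mem_Ioi.2 (sub_pos.2 hν)⟩
  refine tendsto_atTop_mono' _ (eventually_mem_nhdsWithin.mono fun ν hν =>
    le_logJensenGap hp hM hi₀ hVi₀ hν) (tendsto_atTop_add_const_right _ _ ?_)
  exact (tendsto_log_nhdsGT_zero.comp hsub).const_mul_atBot_of_neg (by linarith)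

lemma logJensenGap_le (hp : ∀ i ∈ S, 0 < p i) (hp1 : ∑ i ∈ S, p i = 1) {m M : ℝ}
    (hm : ∀ i ∈ S, m ≤ V i) (hM : ∀ i ∈ S, V i ≤ M) {ν : ℝ} (hν : M < ν) :
    logJensenGap S p V ν ≤ (M - m) / (ν - M) := by
  have hS : S.Nonempty := nonempty_of_sum_ne_zero (f := p) (by simp [hp1])
  have hν' : ∀ i ∈ S, V i < ν := fun i hi => (hM i hi).trans_lt hν
  have hνM : 0 < ν - M := sub_pos.2 hν
  have hνm : 0 < ν - m := by
    obtain ⟨i, hi⟩ := hS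
    linarith [hm i hi, hM i hi]
  have hlog : ∑ i ∈ S, p i * log (ν - V i) ≤ log (ν - m) :=
    calc ∑ i ∈ S, p i * log (ν - V i) ≤ ∑ i ∈ S, p i * log (ν - m) := by
          refine sum_le_sum fun i hi => ?_
          gcongr
          exacts [(hp i hi).le, sub_pos.2 (hν' i hi), hm i hi]
      _ = log (ν - m) := by rw [← sum_mul, hp1, one_mul]
  have hinv : log (∑ i ∈ S, p i / (ν - V i)) ≤ - log (ν - M) := by
    rw [← log_inv]
    refine log_le_log (sum_div_sub_pos hp hS hν') ?_
    calc ∑ i ∈ S, p i / (ν - V i) ≤ ∑ i ∈ S, p i / (ν - M) := by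
          refine sum_le_sum fun i hi => ?_
          gcongr
          exacts [(hp i hi).le, hM i hi]
      _ = (ν - M)⁻¹ := by rw [← sum_div, hp1, one_div]
  have hratio : log (ν - m) - log (ν - M) ≤ (M - m) / (ν - M) := by
    rw [← log_div hνm.ne' hνM.ne']
    refine (log_le_sub_one_of_pos (div_pos hνm hνM)).trans_eq ?_
    field_simp
    ring
  rw [logJensenGap]
  linarith

lemma eventually_logJensenGap_le (hp : ∀ i ∈ S, 0 < p i) (hp1 : ∑ i ∈ S, p i = 1) {M : ℝ}
    (hM : ∀ i ∈ S, V i ≤ M) {ε : ℝ} (hε : 0 < ε) : ∀ᶠ ν in atTop, logJensenGap S p V ν ≤ ε := by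
  obtain ⟨m, hm⟩ := (S.image V).bddBelow
  have hdecay : Tendsto (fun ν => (M - m) / (ν - M)) atTop (𝓝 0) :=
    tendsto_const_nhds.div_atTop (tendsto_atTop_add_const_right _ (-M) tendsto_id)
  filter_upwards [hdecay.eventually (ge_mem_nhds hε), eventually_gt_atTop M] with ν hε' hν
  exact (logJensenGap_le hp hp1 (fun i hi => hm (mem_image_of_mem V hi)) hM hν).trans hε'

theorem existsUnique_logJensenGap_eq (hp : ∀ i ∈ S, 0 < p i) (hp1 : ∑ i ∈ S, p i = 1)
    {M : ℝ} (hM : ∀ i ∈ S, V i ≤ M) {i₀ : ι} (hi₀ : i₀ ∈ S) (hVi₀ : V i₀ = M)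
    (hV : ∃ i ∈ S, ∃ j ∈ S, V i ≠ V j) (hq : ∑ i ∈ S with V i = M, p i < 1)
    {ε : ℝ} (hε : 0 < ε) : ∃! ν, M < ν ∧ logJensenGap S p V ν = ε := by
  obtain ⟨a, haε, haM⟩ := (((tendsto_logJensenGap_nhdsGT hp hM hi₀ hVi₀ hq).eventually_ge_atTop
    ε).and self_mem_nhdsWithin).exists
  obtain ⟨b, hbε, hab⟩ := ((eventually_logJensenGap_le hp hp1 hM hε).and
    (eventually_ge_atTop a)).exists
  obtain ⟨ν, hν, hfν⟩ := intermediate_value_Icc' hab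
    ((continuousOn_logJensenGap hp ⟨i₀, hi₀⟩ hM).mono fun x hx => haM.trans_le hx.1) ⟨hbε, haε⟩
  have hνM : M < ν := haM.trans_le hν.1
  exact ⟨ν, ⟨hνM, hfν⟩, fun μ ⟨hμM, hfμ⟩ =>
    (strictAntiOn_logJensenGap hp hp1 hV hM).injOn hμM hνM (hfμ.trans hfν.symm)⟩

end

/-- Under the non-degeneracy assumptions, there is a unique
ν* > max_{i ∈ Z̄} V i with f(ν*) = ε. -/
theorem exists_unique_root (n : ℕ) (p V : Fin n → ℝ) (M : ℝ)
    (hp0 : ∀ i, 0 ≤ p i) (hp1 : ∑ i, p i = 1)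
    (hMmax : ∀ i, 0 < p i → V i ≤ M) (hMmem : ∃ i, 0 < p i ∧ V i = M)
    (hV : ∃ i j, 0 < p i ∧ 0 < p j ∧ V i ≠ V j)
    (hmass : ∑ i ∈ univ.filter (fun i => 0 < p i ∧ V i = M), p i < 1)
    (ε : ℝ) (hε : 0 < ε) :
    ∃! ν : ℝ, (∀ i, 0 < p i → V i < ν) ∧
      (∑ i ∈ univ.filter (fun i => 0 < p i), p i * Real.log (ν - V i))
        + Real.log (∑ i ∈ univ.filter (fun i => 0 < p i), p i / (ν - V i)) = ε := by
  set S := univ.filter (fun i => 0 < p i)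
  have hmemS i : i ∈ S ↔ 0 < p i := by simp [S]
  obtain ⟨i₀, hpi₀, hVi₀⟩ := hMmem
  have hsupp ν : (∀ i, 0 < p i → V i < ν) ↔ M < ν :=
    ⟨fun h => hVi₀ ▸ h i₀ hpi₀, fun h i hi => (hMmax i hi).trans_lt h⟩
  simp_rw [hsupp]
  refine existsUnique_logJensenGap_eq (fun i hi => (hmemS i).1 hi) ?_
    (fun i hi => hMmax i ((hmemS i).1 hi)) ((hmemS i₀).2 hpi₀) hVi₀ ?_ ?_ hε
  · rw [sum_filter_of_ne fun i _ h => (hp0 i).lt_of_ne' h, hp1]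
  · obtain ⟨i, j, hi, hj, hij⟩ := hV
    exact ⟨i, (hmemS i).2 hi, j, (hmemS j).2 hj, hij⟩
  · rwa [filter_filter]
end
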